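/- Suppose points x_1,…,x_m ∈ {0,1}^n satisfy, for every polynomial p of degree at most d: Σ_i |p(x_i)| ∈ [1−δ, 1+δ]·m·E[|p|] and Σ_i p(x_i)² ∈ [1−δ, 1+δ]·m·E[p²]. Then for every degree-d polynomial p and every subset S ⊆ [m] with |S| ≤ (3^{-2d}/4 − 8δ)·m, we have Σ_{i∈S} |p(x_i)| ≤ (1/2 − δ)·Σ_{i∈[m]} |p(x_i)|. -/

import Mathlib

open Finset

/-- The character of `𝔽₂ⁿ` indexed by `ξ`, as a real-valued function. -/
noncomputable def chi {n : ℕ} (ξ x : Fin n → ZMod 2) : ℝ :=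
  if (∑ i, ξ i * x i : ZMod 2) = 0 then 1 else -1

/-- Expectation over the uniform measure on `{0,1}ⁿ`. -/
noncomputable def cubeExp {n : ℕ} (f : (Fin n → ZMod 2) → ℝ) : ℝ :=
  (∑ x : Fin n → ZMod 2, f x) / 2 ^ n

/-- Fourier coefficient of `f` at `ξ`. -/
noncomputable def fCoeff {n : ℕ} (f : (Fin n → ZMod 2) → ℝ) (ξ : Fin n → ZMod 2) : ℝ :=
  cubeExp (fun x => f x * chi ξ x)

/-- Hamming weight of `ξ ∈ 𝔽₂ⁿ`. -/
def hamming {n : ℕ} (ξ : Fin n → ZMod 2) : ℕ :=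
  (Finset.univ.filter fun i => ξ i ≠ 0).card

/-- `p` is a polynomial of degree at most `d` on the Boolean cube: its Fourier
expansion is supported on characters of Hamming weight at most `d`. -/
def IsDegLE {n : ℕ} (d : ℕ) (p : (Fin n → ZMod 2) → ℝ) : Prop :=
  ∃ c : (Fin n → ZMod 2) → ℝ, (∀ ξ, c ξ ≠ 0 → hamming ξ ≤ d) ∧
    ∀ x, p x = ∑ ξ, c ξ * chi ξ x

-- sum over cube splits
lemma cube_sum_split {n : ℕ} (F : (Fin (n+1) → ZMod 2) → ℝ) :
    ∑ x : Fin (n+1) → ZMod 2, F x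
      = ∑ y : Fin n → ZMod 2, (F (Fin.cons 0 y) + F (Fin.cons 1 y)) := by
  rw [← (Fintype.sum_equiv (Fin.consEquiv fun _ => ZMod 2) _ _ (fun z => rfl) :
    ∑ z : ZMod 2 × (Fin n → ZMod 2), F (Fin.cons z.1 z.2) = _)]
  rw [Fintype.sum_prod_type]
  have h2 : ∀ G : ZMod 2 → ℝ, ∑ b : ZMod 2, G b = G 0 + G 1 := by
    intro G
    have : (Finset.univ : Finset (ZMod 2)) = {0, 1} := by decide
    rw [this, Finset.sum_insert (by decide), Finset.sum_singleton]
  rw [h2, ← Finset.sum_add_distrib]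

lemma cubeExp_split {n : ℕ} (F : (Fin (n+1) → ZMod 2) → ℝ) :
    cubeExp F = (cubeExp (fun y => F (Fin.cons 0 y) + F (Fin.cons 1 y))) / 2 := by
  unfold cubeExp
  rw [cube_sum_split]
  ring

lemma chi_cons {n : ℕ} (b a : ZMod 2) (ξ y : Fin n → ZMod 2) :
    chi (Fin.cons b ξ) (Fin.cons a y)
      = (if b * a = 0 then (1:ℝ) else -1) * chi ξ y := by
  unfold chi
  rw [Fin.sum_univ_succ]
  simp only [Fin.cons_zero, Fin.cons_succ]
  set s := b * a
  set t := ∑ i : Fin n, ξ i * y i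
  have two : ∀ u : ZMod 2, u = 0 ∨ u = 1 := by decide
  have hs := two s
  have ht := two t
  rcases hs with h | h <;> rcases ht with h' | h' <;> simp [h, h'] <;> decide

lemma hamming_cons {n : ℕ} (b : ZMod 2) (ξ : Fin n → ZMod 2) :
    hamming (Fin.cons b ξ) = (if b ≠ 0 then 1 else 0) + hamming ξ := by
  unfold hamming
  rw [Finset.card_filter, Finset.card_filter, Fin.sum_univ_succ]
  simp [Fin.cons_zero, Fin.cons_succ]

lemma cubeExp_nonneg {n : ℕ} {f : (Fin n → ZMod 2) → ℝ} (h : ∀ x, 0 ≤ f x) :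
    0 ≤ cubeExp f :=
  div_nonneg (Finset.sum_nonneg fun x _ => h x) (by positivity)

lemma cubeExp_congr {n : ℕ} {f g : (Fin n → ZMod 2) → ℝ} (h : ∀ x, f x = g x) :
    cubeExp f = cubeExp g := by
  unfold cubeExp; rw [Finset.sum_congr rfl fun x _ => h x]

lemma cubeExp_add {n : ℕ} (f g : (Fin n → ZMod 2) → ℝ) :
    cubeExp (fun x => f x + g x) = cubeExp f + cubeExp g := by
  unfold cubeExp; rw [Finset.sum_add_distrib]; ring

lemma cubeExp_smul {n : ℕ} (r : ℝ) (f : (Fin n → ZMod 2) → ℝ) :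
    cubeExp (fun x => r * f x) = r * cubeExp f := by
  unfold cubeExp; rw [← Finset.mul_sum]; ring

lemma poly_cons {n : ℕ} (c : (Fin (n+1) → ZMod 2) → ℝ) (a : ZMod 2) (y : Fin n → ZMod 2) :
    ∑ ξ, c ξ * chi ξ (Fin.cons a y)
      = (∑ ξ', c (Fin.cons 0 ξ') * chi ξ' y)
        + (if a = 0 then (1:ℝ) else -1) * ∑ ξ', c (Fin.cons 1 ξ') * chi ξ' y := by
  rw [cube_sum_split (fun ξ => c ξ * chi ξ (Fin.cons a y))]
  rw [Finset.sum_add_distrib, Finset.mul_sum]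
  congr 1
  · apply Finset.sum_congr rfl; intro ξ' _
    rw [chi_cons]; simp
  · apply Finset.sum_congr rfl; intro ξ' _
    rw [chi_cons, one_mul]; ring

lemma bonami (n : ℕ) : ∀ (d : ℕ) (c : (Fin n → ZMod 2) → ℝ),
    (∀ ξ, c ξ ≠ 0 → hamming ξ ≤ d) →
    cubeExp (fun x => (∑ ξ, c ξ * chi ξ x) ^ 4)
      ≤ 9 ^ d * (cubeExp (fun x => (∑ ξ, c ξ * chi ξ x) ^ 2)) ^ 2 := by
  induction n with
  | zero =>
    intro d c _
    have h9 : (1:ℝ) ≤ 9 ^ d := one_le_pow₀ (by norm_num)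
    have huniq : ∀ f : (Fin 0 → ZMod 2) → ℝ, cubeExp f = f default := by
      intro f; unfold cubeExp; rw [Fintype.sum_unique]; norm_num
      exact congrArg f (Subsingleton.elim _ _)
    rw [huniq, huniq]
    set v := ∑ ξ, c ξ * chi ξ default with hv
    have hr : v ^ 4 = (v ^ 2) ^ 2 := by ring
    rw [hr]
    nlinarith [sq_nonneg (v ^ 2)]
  | succ n ih =>
    intro d c h
    set G : (Fin n → ZMod 2) → ℝ := fun y => ∑ ξ', c (Fin.cons 0 ξ') * chi ξ' y with hGdef
    set H : (Fin n → ZMod 2) → ℝ := fun y => ∑ ξ', c (Fin.cons 1 ξ') * chi ξ' y with hHdef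
    have hdec0 : ∀ y, (∑ ξ, c ξ * chi ξ (Fin.cons 0 y)) = G y + H y := by
      intro y; rw [poly_cons]; simp; rfl
    have hdec1 : ∀ y, (∑ ξ, c ξ * chi ξ (Fin.cons 1 y)) = G y - H y := by
      intro y; rw [poly_cons]
      have : (1 : ZMod 2) ≠ 0 := by decide
      simp [this]; ring
    have hG : ∀ ξ', (c (Fin.cons 0 ξ')) ≠ 0 → hamming ξ' ≤ d := by
      intro ξ' hne
      have := h _ hne
      rw [hamming_cons] at this
      simpa using this
    have hH : ∀ ξ', (c (Fin.cons 1 ξ')) ≠ 0 → hamming ξ' ≤ d - 1 := by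
      intro ξ' hne
      have := h _ hne
      rw [hamming_cons] at this
      have h1 : (1 : ZMod 2) ≠ 0 := by decide
      rw [if_pos h1] at this
      omega
    -- second moment
    have hE2 : cubeExp (fun x => (∑ ξ, c ξ * chi ξ x) ^ 2)
        = cubeExp (fun y => G y ^ 2) + cubeExp (fun y => H y ^ 2) := by
      rw [cubeExp_split]
      have : (cubeExp fun y => (∑ ξ, c ξ * chi ξ (Fin.cons 0 y)) ^ 2
          + (∑ ξ, c ξ * chi ξ (Fin.cons 1 y)) ^ 2)
          = cubeExp fun y => 2 * (G y ^ 2 + H y ^ 2) := by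
        apply cubeExp_congr; intro y; rw [hdec0, hdec1]; ring
      rw [this, cubeExp_smul, cubeExp_add]; ring
    -- fourth moment
    have hE4 : cubeExp (fun x => (∑ ξ, c ξ * chi ξ x) ^ 4)
        = cubeExp (fun y => G y ^ 4) + 6 * cubeExp (fun y => G y ^ 2 * H y ^ 2)
          + cubeExp (fun y => H y ^ 4) := by
      rw [cubeExp_split]
      have : (cubeExp fun y => (∑ ξ, c ξ * chi ξ (Fin.cons 0 y)) ^ 4
          + (∑ ξ, c ξ * chi ξ (Fin.cons 1 y)) ^ 4)
          = cubeExp fun y => 2 * (G y ^ 4 + (6 * (G y ^ 2 * H y ^ 2) + H y ^ 4)) := by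
        apply cubeExp_congr; intro y; rw [hdec0, hdec1]; ring
      rw [this, cubeExp_smul, cubeExp_add, cubeExp_add, cubeExp_smul]; ring
    have hg4 : cubeExp (fun y => G y ^ 4)
        ≤ 9 ^ d * (cubeExp fun y => G y ^ 2) ^ 2 := ih d _ hG
    have hh4 : cubeExp (fun y => H y ^ 4)
        ≤ 9 ^ (d - 1) * (cubeExp fun y => H y ^ 2) ^ 2 := ih (d - 1) _ hH
    have hg40 : 0 ≤ cubeExp (fun y => G y ^ 4) :=
      cubeExp_nonneg fun y => by positivity
    have hh40 : 0 ≤ cubeExp (fun y => H y ^ 4) :=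
      cubeExp_nonneg fun y => by positivity
    have hcs : (cubeExp fun y => G y ^ 2 * H y ^ 2) ^ 2
        ≤ (cubeExp fun y => G y ^ 4) * cubeExp (fun y => H y ^ 4) := by
      have key := Finset.sum_mul_sq_le_sq_mul_sq Finset.univ
        (fun y : Fin n → ZMod 2 => G y ^ 2) (fun y => H y ^ 2)
      simp only [cubeExp]
      rw [div_mul_div_comm, div_pow, sq ((2:ℝ) ^ n)]
      apply div_le_div_of_nonneg_right ?_ (by positivity)
      calc (∑ y : Fin n → ZMod 2, G y ^ 2 * H y ^ 2) ^ 2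
          ≤ (∑ y : Fin n → ZMod 2, (G y ^ 2) ^ 2) * ∑ y : Fin n → ZMod 2, (H y ^ 2) ^ 2 := key
        _ = (∑ y : Fin n → ZMod 2, G y ^ 4) * ∑ y : Fin n → ZMod 2, H y ^ 4 := by
            congr 1 <;> (apply Finset.sum_congr rfl; intro y _; ring)
    set a := cubeExp (fun y => G y ^ 2) with ha
    set b := cubeExp (fun y => H y ^ 2) with hb
    have ha0 : 0 ≤ a := cubeExp_nonneg fun y => sq_nonneg _
    have hb0 : 0 ≤ b := cubeExp_nonneg fun y => sq_nonneg _
    set xc := cubeExp (fun y => G y ^ 2 * H y ^ 2) with hxc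
    have hxc0 : 0 ≤ xc := cubeExp_nonneg fun y => mul_nonneg (sq_nonneg _) (sq_nonneg _)
    rcases Nat.eq_zero_or_pos d with hd | hd
    · -- d = 0 : H vanishes
      subst hd
      have hH0 : ∀ y, H y = 0 := by
        intro y
        rw [hHdef]
        apply Finset.sum_eq_zero
        intro ξ' _
        by_cases hc : c (Fin.cons 1 ξ') = 0
        · rw [hc]; ring
        · exact absurd (h _ hc) (by rw [hamming_cons]; simp)
      have hb' : b = 0 := by
        rw [hb, show (fun y => H y ^ 2) = fun _ => (0:ℝ) from funext fun y => by
          rw [hH0]; ring]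
        unfold cubeExp; simp
      have hxc' : xc = 0 := by
        rw [hxc, show (fun y => G y ^ 2 * H y ^ 2) = fun _ => (0:ℝ) from
          funext fun y => by rw [hH0]; ring]
        unfold cubeExp; simp
      have hh4' : cubeExp (fun y => H y ^ 4) = 0 := by
        rw [show (fun y => H y ^ 4) = fun _ => (0:ℝ) from funext fun y => by
          rw [hH0]; ring]
        unfold cubeExp; simp
      rw [hE4, hE2, hxc', hh4', hb']
      simpa using hg4
    · -- d ≥ 1
      set q := (9:ℝ) ^ (d - 1) with hq
      have hq0 : 0 < q := by positivity
      have h9d : (9:ℝ) ^ d = 9 * q := by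
        rw [hq, ← pow_succ']
        congr 1
        omega
      rw [h9d] at hg4
      have hcross : xc ≤ 3 * q * a * b := by
        have hM : 0 ≤ 3 * q * a * b := by positivity
        have h2 : xc ^ 2 ≤ (3 * q * a * b) ^ 2 := by
          calc xc ^ 2 ≤ (cubeExp fun y => G y ^ 4) * cubeExp (fun y => H y ^ 4) := hcs
            _ ≤ (9 * q * a ^ 2) * (q * b ^ 2) := by
                apply mul_le_mul hg4 hh4 hh40 (by positivity)
            _ = (3 * q * a * b) ^ 2 := by ring
        nlinarith [sq_nonneg (xc - 3 * q * a * b), sq_nonneg (xc + 3 * q * a * b)]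
      rw [hE4, hE2, h9d]
      nlinarith [mul_nonneg ha0 hb0, mul_nonneg (mul_nonneg hq0.le hb0) hb0, hg4, hh4, hcross]

lemma cubeExp_le_cubeExp {n : ℕ} {f g : (Fin n → ZMod 2) → ℝ} (h : ∀ x, f x ≤ g x) :
    cubeExp f ≤ cubeExp g :=
  div_le_div_of_nonneg_right (Finset.sum_le_sum fun x _ => h x) (by positivity)

lemma anticoncentration {n d : ℕ} (p : (Fin n → ZMod 2) → ℝ) (hp : IsDegLE d p) :
    cubeExp (fun z => p z ^ 2) ≤ 9 ^ d * (cubeExp fun z => |p z|) ^ 2 := by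
  obtain ⟨c, hc, hrep⟩ := hp
  set e1 := cubeExp (fun z => |p z|) with he1d
  set e2 := cubeExp (fun z => p z ^ 2) with he2d
  set e3 := cubeExp (fun z => |p z| ^ 3) with he3d
  set e4 := cubeExp (fun z => p z ^ 4) with he4d
  have he1 : 0 ≤ e1 := cubeExp_nonneg fun z => abs_nonneg _
  have he2 : 0 ≤ e2 := cubeExp_nonneg fun z => sq_nonneg _
  have he3 : 0 ≤ e3 := cubeExp_nonneg fun z => by positivity
  have he4 : 0 ≤ e4 := cubeExp_nonneg fun z => by positivity
  -- Cauchy-Schwarz 1 : e2^2 ≤ e1 * e3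
  have c1 : e2 ^ 2 ≤ e1 * e3 := by
    have key := Finset.sum_mul_sq_le_sq_mul_sq Finset.univ
      (fun z : Fin n → ZMod 2 => Real.sqrt |p z|) (fun z => Real.sqrt (|p z| ^ 3))
    have e1' : ∀ z : Fin n → ZMod 2, Real.sqrt |p z| * Real.sqrt (|p z| ^ 3) = p z ^ 2 := by
      intro z
      rw [← Real.sqrt_mul (abs_nonneg _)]
      have : |p z| * |p z| ^ 3 = (p z ^ 2) ^ 2 := by
        have := sq_abs (p z); nlinarith [sq_abs (p z)]
      rw [this, Real.sqrt_sq (sq_nonneg _)]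
    have e2' : ∀ z : Fin n → ZMod 2, Real.sqrt |p z| ^ 2 = |p z| :=
      fun z => Real.sq_sqrt (abs_nonneg _)
    have e3' : ∀ z : Fin n → ZMod 2, Real.sqrt (|p z| ^ 3) ^ 2 = |p z| ^ 3 :=
      fun z => Real.sq_sqrt (by positivity)
    rw [Finset.sum_congr rfl fun z _ => e1' z, Finset.sum_congr rfl fun z _ => e2' z,
      Finset.sum_congr rfl fun z _ => e3' z] at key
    rw [he2d, he1d, he3d]
    simp only [cubeExp]
    rw [div_pow, div_mul_div_comm, sq ((2:ℝ) ^ n)]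
    exact div_le_div_of_nonneg_right key (by positivity)
  -- Cauchy-Schwarz 2 : e3^2 ≤ e2 * e4
  have c2 : e3 ^ 2 ≤ e2 * e4 := by
    have key := Finset.sum_mul_sq_le_sq_mul_sq Finset.univ
      (fun z : Fin n → ZMod 2 => |p z|) (fun z => p z ^ 2)
    have e3' : ∀ z : Fin n → ZMod 2, |p z| * p z ^ 2 = |p z| ^ 3 := by
      intro z; nlinarith [sq_abs (p z), abs_nonneg (p z)]
    have e4' : ∀ z : Fin n → ZMod 2, (p z ^ 2) ^ 2 = p z ^ 4 := fun z => by ring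
    have e2' : ∀ z : Fin n → ZMod 2, |p z| ^ 2 = p z ^ 2 := fun z => sq_abs _
    rw [Finset.sum_congr rfl fun z _ => e3' z, Finset.sum_congr rfl fun z _ => e2' z,
      Finset.sum_congr rfl fun z _ => e4' z] at key
    rw [he3d, he2d, he4d]
    simp only [cubeExp]
    rw [div_pow, div_mul_div_comm, sq ((2:ℝ) ^ n)]
    exact div_le_div_of_nonneg_right key (by positivity)
  -- Bonami : e4 ≤ 9^d * e2^2
  have c3 : e4 ≤ 9 ^ d * e2 ^ 2 := by
    have hb := bonami n d c hc
    have h4 : (fun z => p z ^ 4) = fun z => (∑ ξ, c ξ * chi ξ z) ^ 4 :=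
      funext fun z => by rw [hrep]
    have h2 : (fun z => p z ^ 2) = fun z => (∑ ξ, c ξ * chi ξ z) ^ 2 :=
      funext fun z => by rw [hrep]
    rw [he4d, he2d, h4, h2]
    exact hb
  rcases eq_or_lt_of_le he2 with h0 | hpos
  · rw [← h0]; positivity
  · have chain : e2 * e2 ^ 3 ≤ (9 ^ d * e1 ^ 2) * e2 ^ 3 := by
      calc e2 * e2 ^ 3 = (e2 ^ 2) ^ 2 := by ring
        _ ≤ (e1 * e3) ^ 2 := pow_le_pow_left₀ (sq_nonneg _) c1 2
        _ = e1 ^ 2 * e3 ^ 2 := by ring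
        _ ≤ e1 ^ 2 * (e2 * e4) := mul_le_mul_of_nonneg_left c2 (sq_nonneg _)
        _ ≤ e1 ^ 2 * (e2 * (9 ^ d * e2 ^ 2)) :=
            mul_le_mul_of_nonneg_left (mul_le_mul_of_nonneg_left c3 he2) (sq_nonneg _)
        _ = (9 ^ d * e1 ^ 2) * e2 ^ 3 := by ring
    exact le_of_mul_le_mul_right chain (pow_pos hpos 3)

/-- if the sample points `x_1,…,x_m` give `(1±δ)` multiplicative
`ℓ₁` and `ℓ₂` concentration for all degree-`d` polynomials, then for every
degree-`d` polynomial `p` and every `S ⊆ [m]` with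
`|S| ≤ (3^{-2d}/4 − 8δ)·m`, one has `Σ_{i∈S}|p(x_i)| ≤ (1/2 − δ)·Σ_{i∈[m]}|p(x_i)|`. -/
theorem stmt_14 {n d m : ℕ} (x : Fin m → (Fin n → ZMod 2))
    (δ : ℝ) (hδ : 0 < δ) (hδ' : δ < 1 / 100)
    (h1 : ∀ p : (Fin n → ZMod 2) → ℝ, IsDegLE d p →
      (1 - δ) * m * cubeExp (fun z => |p z|) ≤ ∑ i, |p (x i)| ∧
      ∑ i, |p (x i)| ≤ (1 + δ) * m * cubeExp (fun z => |p z|))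
    (h2 : ∀ p : (Fin n → ZMod 2) → ℝ, IsDegLE d p →
      (1 - δ) * m * cubeExp (fun z => p z ^ 2) ≤ ∑ i, p (x i) ^ 2 ∧
      ∑ i, p (x i) ^ 2 ≤ (1 + δ) * m * cubeExp (fun z => p z ^ 2))
    (p : (Fin n → ZMod 2) → ℝ) (hp : IsDegLE d p)
    (S : Finset (Fin m)) (hS : (S.card : ℝ) ≤ (((3 : ℝ) ^ (2 * d))⁻¹ / 4 - 8 * δ) * m) :
    ∑ i ∈ S, |p (x i)| ≤ (1 / 2 - δ) * ∑ i, |p (x i)| := by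
  set K : ℝ := 9 ^ d with hKd
  have hK1 : (1:ℝ) ≤ K := one_le_pow₀ (by norm_num)
  have hKpos : (0:ℝ) < K := by positivity
  have hK3 : ((3:ℝ) ^ (2 * d)) = K := by rw [pow_mul]; norm_num; exact hKd.symm
  rw [hK3] at hS
  set e1 := cubeExp (fun z => |p z|) with he1d
  set e2 := cubeExp (fun z => p z ^ 2) with he2d
  have he1 : 0 ≤ e1 := cubeExp_nonneg fun z => abs_nonneg _
  set A := ∑ i, |p (x i)| with hAd
  set B := ∑ i, p (x i) ^ 2 with hBd
  have hA0 : 0 ≤ A := Finset.sum_nonneg fun i _ => abs_nonneg _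
  have hA : (1 - δ) * m * e1 ≤ A := (h1 p hp).1
  have hB : B ≤ (1 + δ) * m * e2 := (h2 p hp).2
  have hanti : e2 ≤ K * e1 ^ 2 := anticoncentration p hp
  set X := ∑ i ∈ S, |p (x i)| with hXd
  have hX0 : 0 ≤ X := Finset.sum_nonneg fun i _ => abs_nonneg _
  -- Cauchy-Schwarz on S
  have hXsq : X ^ 2 ≤ (S.card : ℝ) * ∑ i ∈ S, p (x i) ^ 2 := by
    have key := Finset.sum_mul_sq_le_sq_mul_sq S
      (fun _ : Fin m => (1:ℝ)) (fun i => |p (x i)|)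
    simpa [sq_abs] using key
  have hsub : ∑ i ∈ S, p (x i) ^ 2 ≤ B :=
    Finset.sum_le_sum_of_subset_of_nonneg (Finset.subset_univ S)
      (fun i _ _ => sq_nonneg _)
  have hcard0 : (0:ℝ) ≤ S.card := Nat.cast_nonneg _
  have hδ2 : (0:ℝ) ≤ 1 / 2 - δ := by linarith
  have hAlow : 0 ≤ (1 - δ) * m * e1 :=
    mul_nonneg (mul_nonneg (by linarith) (Nat.cast_nonneg m)) he1
  -- coefficient inequality
  have hco : (K⁻¹ / 4 - 8 * δ) * (1 + δ) * K ≤ (1 / 2 - δ) ^ 2 * (1 - δ) ^ 2 := by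
    have hKi : K⁻¹ * K = 1 := inv_mul_cancel₀ (ne_of_gt hKpos)
    have hrw : (K⁻¹ / 4 - 8 * δ) * (1 + δ) * K = (1 / 4 - 8 * δ * K) * (1 + δ) := by
      field_simp
    rw [hrw]
    have hδK : δ ≤ δ * K := le_mul_of_one_le_right hδ.le hK1
    nlinarith [hδK, hδ, hδ', mul_pos hδ hδ]
  apply le_of_pow_le_pow_left₀ two_ne_zero (mul_nonneg hδ2 hA0)
  calc X ^ 2 ≤ (S.card : ℝ) * ∑ i ∈ S, p (x i) ^ 2 := hXsq
    _ ≤ (S.card : ℝ) * B := mul_le_mul_of_nonneg_left hsub hcard0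
    _ ≤ (S.card : ℝ) * ((1 + δ) * m * e2) :=
        mul_le_mul_of_nonneg_left hB hcard0
    _ ≤ (S.card : ℝ) * ((1 + δ) * m * (K * e1 ^ 2)) := by
        apply mul_le_mul_of_nonneg_left ?_ hcard0
        apply mul_le_mul_of_nonneg_left hanti
        positivity
    _ ≤ ((K⁻¹ / 4 - 8 * δ) * m) * ((1 + δ) * m * (K * e1 ^ 2)) := by
        apply mul_le_mul_of_nonneg_right hS
        positivity
    _ = ((K⁻¹ / 4 - 8 * δ) * (1 + δ) * K) * ((m : ℝ) ^ 2 * e1 ^ 2) := by ring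
    _ ≤ ((1 / 2 - δ) ^ 2 * (1 - δ) ^ 2) * ((m : ℝ) ^ 2 * e1 ^ 2) :=
        mul_le_mul_of_nonneg_right hco (by positivity)
    _ = ((1 / 2 - δ) * ((1 - δ) * m * e1)) ^ 2 := by ring
    _ ≤ ((1 / 2 - δ) * A) ^ 2 := by
        apply pow_le_pow_left₀ (mul_nonneg hδ2 hAlow)
        exact mul_le_mul_of_nonneg_left hA hδ2
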